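/- arXiv:2303.10569 — 3 statements merged into one kernel-verified Lean document; each statement's English description precedes it below -/
import Mathlib

section
/- For every γ ≥ 1/2 there exists a constant C > 0 such that for all t ≥ 0 and all r > 0: ∫_{t+r}^∞ ⟨ξ⟩^{−1} · ( ∫_{t−r}^{t+r} (1+η²)^{−1−γ}·1_{\{ξ^{1/2} < η < ξ/2\}}(η) dη ) dξ ≤ C·r/⟨t+r⟩². -/
/-!
The inner integrand lives on `√ξ < η < ξ / 2` with `η ≤ t + r =: a`; this forces `η > 2` and
`ξ < a ^ 2`, and there `(1 + η ^ 2) ^ (-1 - γ) ≤ η⁻³` since `γ ≥ 1/2`.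
If `r ≥ a / 4`, integrating `η⁻³` over `η > √ξ` bounds the inner integral by `(2ξ)⁻¹`, and
`∫_a^∞ ξ⁻¹ (2ξ)⁻¹ dξ = (2a)⁻¹ ≤ 2r / a²`. If `r < a / 4`, then `η ≥ t - r > a / 2`, so the
inner integral is at most `2r (a / 2)⁻³`, while `⟨ξ⟩⁻¹ ≤ a⁻¹` on an interval of length `< a ^ 2`;
this gives `16 r / a²`.
-/

noncomputable section

open MeasureTheory Real Set Filter Topology

/-- Japanese bracket ⟨q⟩ = √(1+q²). -/
noncomputable def jb (q : ℝ) : ℝ := Real.sqrt (1 + q ^ 2)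

lemma jb_pos (q : ℝ) : 0 < jb q := Real.sqrt_pos.2 (by positivity)

lemma le_jb (q : ℝ) : q ≤ jb q := Real.le_sqrt_of_sq_le (by linarith)

lemma jb_sq (q : ℝ) : jb q ^ 2 = 1 + q ^ 2 := Real.sq_sqrt (by positivity)

lemma one_add_sq_rpow_le_inv_pow_three {γ η : ℝ} (hγ : 1 / 2 ≤ γ) (hη : 0 < η) :
    (1 + η ^ 2) ^ (-1 - γ) ≤ (η ^ 3)⁻¹ := by
  calc (1 + η ^ 2) ^ (-1 - γ) ≤ (1 + η ^ 2) ^ (-(3 / 2) : ℝ) :=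
        rpow_le_rpow_of_exponent_le (by nlinarith) (by linarith)
    _ ≤ (η ^ 2) ^ (-(3 / 2) : ℝ) :=
        rpow_le_rpow_of_nonpos (by positivity) (by linarith) (by norm_num)
    _ = (η ^ 3)⁻¹ := by
        rw [← rpow_natCast, ← rpow_mul hη.le,
          show ((2 : ℕ) : ℝ) * -(3 / 2) = -(3 : ℕ) by norm_num, rpow_neg hη.le, rpow_natCast]

def interiorKernel (γ ξ η : ℝ) : ℝ :=
  (1 + η ^ 2) ^ (-1 - γ) * if √ξ < η ∧ η < ξ / 2 then 1 else 0

section interiorKernel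

variable {γ ξ η b c d : ℝ}

lemma interiorKernel_nonneg : 0 ≤ interiorKernel γ ξ η := by
  unfold interiorKernel
  split_ifs <;> positivity

lemma interiorKernel_eq_zero_of_le_sqrt (h : η ≤ √ξ) : interiorKernel γ ξ η = 0 := by
  simp [interiorKernel, not_lt.2 h]

/-- `√ξ < ξ / 2` forces `ξ > 4`, so the support lies in `η > 2`. -/
lemma interiorKernel_eq_zero_of_le_two (h : η ≤ 2) : interiorKernel γ ξ η = 0 := by
  rw [interiorKernel, if_neg, mul_zero]
  rintro ⟨hlo, hhi⟩
  have hξ : 0 ≤ ξ := by linarith [sqrt_nonneg ξ]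
  nlinarith [sq_sqrt hξ, sqrt_nonneg ξ]

lemma interiorKernel_le_inv_pow_three (hγ : 1 / 2 ≤ γ) (hb : 0 < b) (hbη : b ≤ η) :
    interiorKernel γ ξ η ≤ (b ^ 3)⁻¹ := by
  unfold interiorKernel
  split_ifs
  · rw [mul_one]
    exact (one_add_sq_rpow_le_inv_pow_three hγ (hb.trans_le hbη)).trans (by gcongr)
  · rw [mul_zero]
    positivity

lemma interiorKernel_le_indicator (hγ : 1 / 2 ≤ γ) :
    interiorKernel γ ξ η ≤ (Ioi √ξ).indicator (fun η ↦ η ^ (-3 : ℝ)) η := by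
  by_cases h : √ξ < η
  · have hη : 0 < η := (sqrt_nonneg ξ).trans_lt h
    rw [indicator_of_mem (mem_Ioi.2 h), rpow_neg hη.le,
      show ((3 : ℝ)) = ((3 : ℕ) : ℝ) by norm_num, rpow_natCast]
    exact interiorKernel_le_inv_pow_three hγ hη le_rfl
  · rw [interiorKernel_eq_zero_of_le_sqrt (not_lt.1 h),
      indicator_of_notMem (show η ∉ Ioi √ξ from h)]

lemma intervalIntegral_interiorKernel_nonneg (hcd : c ≤ d) :
    0 ≤ ∫ η in c..d, interiorKernel γ ξ η :=
  intervalIntegral.integral_nonneg hcd fun _ _ ↦ interiorKernel_nonneg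

lemma intervalIntegral_interiorKernel_eq_zero (hcd : c ≤ d)
    (h : ∀ η ≤ d, interiorKernel γ ξ η = 0) : ∫ η in c..d, interiorKernel γ ξ η = 0 := by
  rw [intervalIntegral.integral_congr (g := fun _ ↦ 0), intervalIntegral.integral_zero]
  intro η hη
  rw [uIcc_of_le hcd] at hη
  exact h η hη.2

lemma intervalIntegral_interiorKernel_le_of_le (hγ : 1 / 2 ≤ γ) (hcd : c ≤ d) (hb : 0 < b)
    (hbc : b ≤ c) : ∫ η in c..d, interiorKernel γ ξ η ≤ (d - c) * (b ^ 3)⁻¹ := by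
  have hbound : ∀ η ∈ uIoc c d, ‖interiorKernel γ ξ η‖ ≤ (b ^ 3)⁻¹ := by
    intro η hη
    rw [uIoc_of_le hcd] at hη
    rw [Real.norm_of_nonneg interiorKernel_nonneg]
    exact interiorKernel_le_inv_pow_three hγ hb (hbc.trans hη.1.le)
  calc _ ≤ ‖∫ η in c..d, interiorKernel γ ξ η‖ := le_norm_self _
    _ ≤ (b ^ 3)⁻¹ * |d - c| := intervalIntegral.norm_integral_le_of_norm_le_const hbound
    _ = (d - c) * (b ^ 3)⁻¹ := by rw [abs_of_nonneg (by linarith), mul_comm]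

lemma intervalIntegral_interiorKernel_le_inv_two_mul (hγ : 1 / 2 ≤ γ) (hcd : c ≤ d)
    (hξ : 0 < ξ) : ∫ η in c..d, interiorKernel γ ξ η ≤ (2 * ξ)⁻¹ := by
  have hs : 0 < √ξ := sqrt_pos.2 hξ
  have hint : Integrable ((Ioi √ξ).indicator fun η ↦ η ^ (-3 : ℝ)) :=
    (integrableOn_Ioi_rpow_of_lt (by norm_num) hs).integrable_indicator measurableSet_Ioi
  rw [intervalIntegral.integral_of_le hcd]
  calc ∫ η in Ioc c d, interiorKernel γ ξ η
      ≤ ∫ η in Ioc c d, (Ioi √ξ).indicator (fun η ↦ η ^ (-3 : ℝ)) η :=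
        integral_mono_of_nonneg (.of_forall fun _ ↦ interiorKernel_nonneg) hint.restrict
          (.of_forall fun _ ↦ interiorKernel_le_indicator hγ)
    _ ≤ ∫ η, (Ioi √ξ).indicator (fun η ↦ η ^ (-3 : ℝ)) η :=
        setIntegral_le_integral hint
          (.of_forall fun _ ↦ interiorKernel_nonneg.trans (interiorKernel_le_indicator hγ))
    _ = ∫ η in Ioi √ξ, η ^ (-3 : ℝ) := integral_indicator measurableSet_Ioi
    _ = (2 * ξ)⁻¹ := by
        rw [integral_Ioi_rpow_of_lt (by norm_num) hs, show (-3 + 1 : ℝ) = -2 by norm_num,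
          rpow_neg hs.le, show ((2 : ℝ)) = ((2 : ℕ) : ℝ) by norm_num, rpow_natCast,
          sq_sqrt hξ.le]
        ring

end interiorKernel

lemma setIntegral_mono_on_of_nonneg {α : Type*} [MeasurableSpace α] {μ : Measure α}
    {f g : α → ℝ} {s : Set α} (hs : MeasurableSet s) (hf : ∀ x ∈ s, 0 ≤ f x)
    (hg : IntegrableOn g s μ) (h : ∀ x ∈ s, f x ≤ g x) :
    ∫ x in s, f x ∂μ ≤ ∫ x in s, g x ∂μ :=
  integral_mono_of_nonneg ((ae_restrict_iff' hs).2 (.of_forall hf)) hg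
    ((ae_restrict_iff' hs).2 (.of_forall h))

section OuterIntegral

variable {J : ℝ → ℝ} {a b M : ℝ}

lemma inv_jb_mul_nonneg (hJ0 : ∀ ξ, 0 ≤ J ξ) (ξ : ℝ) : 0 ≤ (jb ξ)⁻¹ * J ξ :=
  mul_nonneg (inv_nonneg.2 (jb_pos ξ).le) (hJ0 ξ)

lemma setIntegral_Ioi_inv_jb_mul_le_inv_two_mul (ha : 0 < a) (hJ0 : ∀ ξ, 0 ≤ J ξ)
    (hJ : ∀ ξ, a < ξ → J ξ ≤ (2 * ξ)⁻¹) : ∫ ξ in Ioi a, (jb ξ)⁻¹ * J ξ ≤ (2 * a)⁻¹ := by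
  have hpointwise : ∀ ξ ∈ Ioi a, (jb ξ)⁻¹ * J ξ ≤ ξ ^ (-2 : ℝ) * 2⁻¹ := by
    intro ξ hξ
    have hξ0 : 0 < ξ := ha.trans hξ
    calc (jb ξ)⁻¹ * J ξ ≤ ξ⁻¹ * (2 * ξ)⁻¹ :=
          mul_le_mul (inv_anti₀ hξ0 (le_jb ξ)) (hJ ξ hξ) (hJ0 ξ) (by positivity)
      _ = ξ ^ (-2 : ℝ) * 2⁻¹ := by
          rw [rpow_neg hξ0.le, show ((2 : ℝ)) = ((2 : ℕ) : ℝ) by norm_num, rpow_natCast]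
          field_simp
  calc ∫ ξ in Ioi a, (jb ξ)⁻¹ * J ξ ≤ ∫ ξ in Ioi a, ξ ^ (-2 : ℝ) * 2⁻¹ :=
        setIntegral_mono_on_of_nonneg measurableSet_Ioi (fun ξ _ ↦ inv_jb_mul_nonneg hJ0 ξ)
          ((integrableOn_Ioi_rpow_of_lt (by norm_num) ha).mul_const _) hpointwise
    _ = (2 * a)⁻¹ := by
        rw [integral_mul_const, integral_Ioi_rpow_of_lt (by norm_num) ha,
          show (-2 + 1 : ℝ) = -1 by norm_num, rpow_neg_one]
        field_simp

lemma setIntegral_Ioi_inv_jb_mul_le_of_eq_zero (ha : 0 < a) (hab : a ≤ b)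
    (hJ0 : ∀ ξ, 0 ≤ J ξ) (hJM : ∀ ξ, J ξ ≤ M) (hJb : ∀ ξ, b < ξ → J ξ = 0) :
    ∫ ξ in Ioi a, (jb ξ)⁻¹ * J ξ ≤ (b - a) * (a⁻¹ * M) := by
  have hpointwise : ∀ ξ ∈ Ioi a, (jb ξ)⁻¹ * J ξ ≤ (Ioc a b).indicator (fun _ ↦ a⁻¹ * M) ξ := by
    intro ξ hξ
    by_cases hξb : ξ ≤ b
    · rw [indicator_of_mem (mem_Ioc.2 ⟨hξ, hξb⟩)]
      exact mul_le_mul (inv_anti₀ ha (hξ.out.le.trans (le_jb ξ))) (hJM ξ) (hJ0 ξ)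
        (inv_nonneg.2 ha.le)
    · rw [hJb ξ (not_le.1 hξb), mul_zero, indicator_of_notMem fun h ↦ hξb h.2]
  calc ∫ ξ in Ioi a, (jb ξ)⁻¹ * J ξ
      ≤ ∫ ξ in Ioi a, (Ioc a b).indicator (fun _ ↦ a⁻¹ * M) ξ :=
        setIntegral_mono_on_of_nonneg measurableSet_Ioi (fun ξ _ ↦ inv_jb_mul_nonneg hJ0 ξ)
          ((integrableOn_const measure_Ioc_lt_top.ne).integrable_indicator
            measurableSet_Ioc).integrableOn hpointwise
    _ = (b - a) * (a⁻¹ * M) := by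
        rw [integral_indicator measurableSet_Ioc, Measure.restrict_restrict measurableSet_Ioc,
          inter_eq_left.2 Ioc_subset_Ioi_self, setIntegral_const, Real.volume_real_Ioc,
          smul_eq_mul, max_eq_left (by linarith)]

end OuterIntegral

/-- the radial weighted double integral estimate
(Lemma A.2 of the paper), bounding the remainder produced by the
interior part of the error of the asymptotic solution. -/
theorem radial_estimate_interior (γ : ℝ) (hγ : 1/2 ≤ γ) :
    ∃ C : ℝ, 0 < C ∧ ∀ t r : ℝ, 0 ≤ t → 0 < r →
      (∫ ξ in Set.Ioi (t + r),
          (jb ξ)⁻¹ *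
            ∫ η in (t - r)..(t + r),
              (1 + η ^ 2) ^ (-1 - γ) *
                (if Real.sqrt ξ < η ∧ η < ξ / 2 then (1:ℝ) else 0)) ≤
        C * r / jb (t + r) ^ 2 := by
  refine ⟨32, by norm_num, fun t r ht hr ↦ ?_⟩
  set a := t + r
  have ha : 0 < a := by positivity
  have hcd : t - r ≤ a := by linarith
  change ∫ ξ in Ioi a, (jb ξ)⁻¹ * ∫ η in (t - r)..a, interiorKernel γ ξ η ≤ _
  have hJ0 : ∀ ξ, 0 ≤ ∫ η in (t - r)..a, interiorKernel γ ξ η :=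
    fun _ ↦ intervalIntegral_interiorKernel_nonneg hcd
  rw [jb_sq]
  rcases le_or_gt a 2 with ha2 | ha2
  · simp_rw [intervalIntegral_interiorKernel_eq_zero hcd fun η hη ↦
      interiorKernel_eq_zero_of_le_two (hη.trans ha2), mul_zero, integral_zero]
    positivity
  rcases le_or_gt a (4 * r) with har | har
  · calc _ ≤ (2 * a)⁻¹ := setIntegral_Ioi_inv_jb_mul_le_inv_two_mul ha hJ0 fun ξ hξ ↦
          intervalIntegral_interiorKernel_le_inv_two_mul hγ hcd (ha.trans hξ)
      _ ≤ 32 * r / (1 + a ^ 2) := by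
          rw [← one_div, div_le_div_iff₀ (by positivity) (by positivity)]
          nlinarith
  · calc _ ≤ (a ^ 2 - a) * (a⁻¹ * ((a - (t - r)) * ((a / 2) ^ 3)⁻¹)) :=
          setIntegral_Ioi_inv_jb_mul_le_of_eq_zero ha (by nlinarith) hJ0
            (fun _ ↦ intervalIntegral_interiorKernel_le_of_le hγ hcd (by positivity)
              (by linarith))
            fun ξ hξ ↦ intervalIntegral_interiorKernel_eq_zero hcd fun η hη ↦
              interiorKernel_eq_zero_of_le_sqrt (hη.trans (le_sqrt_of_sq_le hξ.le))
      _ ≤ 32 * r / (1 + a ^ 2) := by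
          rw [show a - (t - r) = 2 * r by ring]
          field_simp
          nlinarith
end
end

section
/- Let L: [0,1] → ℝ be continuously differentiable. Then lim_{z₀→0⁺} [ ∫_{z₀}^1 L(z)·(z² − z₀²)^{−1/2} dz − L(0)·ln(2/z₀) ] = ∫₀^1 (L(z) − L(0))/z dz, where the integral on the right-hand side converges absolutely. -/
/-!
Write `k_c(z) = (z² − c²)^{-1/2}`. It has the explicit primitive `log (z + √(z² − c²))`,
so `∫_c^1 k_c = log (1 + √(1 − c²)) − log c`, and `L(0) ∫_c^1 k_c − L(0) log (2/c) → 0`.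
Since `L` is `C¹`, hence Lipschitz, on `[0, 1]`, we have `|L z − L 0| ≤ K z`; this makes the
slope `(L z − L 0)/z` bounded, hence integrable, and the replacement of `k_c(z)` by `1/z`
costs at most `K c ∫_c^1 k_c = O(c log (1/c))`, because `z − √(z² − c²) ≤ c`.
-/

noncomputable section

open MeasureTheory Real Set Filter Topology

open scoped NNReal

theorem hasDerivAt_log_add_sqrt_sq_sub_sq {c z : ℝ} (hcz : |c| < z) :
    HasDerivAt (fun x => log (x + √(x ^ 2 - c ^ 2))) (√(z ^ 2 - c ^ 2))⁻¹ z := by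
  have hz : 0 < z := (abs_nonneg c).trans_lt hcz
  have hpos : 0 < z ^ 2 - c ^ 2 := by
    rw [sub_pos, ← sq_abs c]
    exact pow_lt_pow_left₀ hcz (abs_nonneg c) two_ne_zero
  have hs : 0 < √(z ^ 2 - c ^ 2) := sqrt_pos.2 hpos
  have hsqrt := ((hasDerivAt_pow 2 z).sub_const (c ^ 2)).sqrt hpos.ne'
  have hsum : HasDerivAt (fun x => x + √(x ^ 2 - c ^ 2)) _ z := (hasDerivAt_id' z).add hsqrt
  convert hsum.log (by positivity) using 1
  field_simp
  ring

theorem continuousOn_log_add_sqrt_sq_sub_sq {c : ℝ} (hc : 0 < c) :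
    ContinuousOn (fun x => log (x + √(x ^ 2 - c ^ 2))) (Ici c) :=
  (continuous_id.add (by fun_prop)).continuousOn.log fun x hx =>
    (add_pos_of_pos_of_nonneg (hc.trans_le hx) (sqrt_nonneg _)).ne'

theorem continuous_log_add_sqrt_sq_sub_sq {b : ℝ} (hb : 0 < b) :
    Continuous fun c => log (b + √(b ^ 2 - c ^ 2)) :=
  (continuous_const.add (by fun_prop)).log fun _ =>
    (add_pos_of_pos_of_nonneg hb (sqrt_nonneg _)).ne'

theorem intervalIntegrable_inv_sqrt_sq_sub_sq {b c : ℝ} (hc : 0 < c) (hcb : c ≤ b) :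
    IntervalIntegrable (fun z => (√(z ^ 2 - c ^ 2))⁻¹) volume c b :=
  (intervalIntegrable_iff_integrableOn_Ioc_of_le hcb).2 <|
    intervalIntegral.integrableOn_deriv_of_nonneg
      ((continuousOn_log_add_sqrt_sq_sub_sq hc).mono Icc_subset_Ici_self)
      (fun z hz => hasDerivAt_log_add_sqrt_sq_sub_sq ((abs_of_pos hc).trans_lt hz.1))
      (fun _ _ => by positivity)

theorem intervalIntegrable_mul_inv_sqrt_sq_sub_sq {f : ℝ → ℝ} {b c : ℝ} (hc : 0 < c)
    (hcb : c ≤ b) (hf : ContinuousOn f (Icc c b)) :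
    IntervalIntegrable (fun z => f z * (√(z ^ 2 - c ^ 2))⁻¹) volume c b :=
  (intervalIntegrable_inv_sqrt_sq_sub_sq hc hcb).continuousOn_mul (by rwa [uIcc_of_le hcb])

theorem integral_inv_sqrt_sq_sub_sq {b c : ℝ} (hc : 0 < c) (hcb : c ≤ b) :
    ∫ z in c..b, (√(z ^ 2 - c ^ 2))⁻¹ = log (b + √(b ^ 2 - c ^ 2)) - log c := by
  rw [intervalIntegral.integral_eq_sub_of_hasDerivAt_of_le hcb
    ((continuousOn_log_add_sqrt_sq_sub_sq hc).mono Icc_subset_Ici_self)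
    (fun z hz => hasDerivAt_log_add_sqrt_sq_sub_sq ((abs_of_pos hc).trans_lt hz.1))
    (intervalIntegrable_inv_sqrt_sq_sub_sq hc hcb)]
  simp

theorem integral_mul_inv_sqrt_sq_sub_sq {f : ℝ → ℝ} {b c : ℝ} (hc : 0 < c) (hcb : c ≤ b)
    (hf : ContinuousOn f (Icc c b)) (y : ℝ) :
    ∫ z in c..b, f z * (√(z ^ 2 - c ^ 2))⁻¹ =
      (∫ z in c..b, (f z - y) * (√(z ^ 2 - c ^ 2))⁻¹) +
        y * (log (b + √(b ^ 2 - c ^ 2)) - log c) := by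
  rw [← integral_inv_sqrt_sq_sub_sq hc hcb, ← intervalIntegral.integral_const_mul,
    ← intervalIntegral.integral_add
      (intervalIntegrable_mul_inv_sqrt_sq_sub_sq (f := fun z => f z - y) hc hcb
        (hf.sub continuousOn_const))
      ((intervalIntegrable_inv_sqrt_sq_sub_sq hc hcb).const_mul y)]
  congr 1 with z
  ring

theorem abs_mul_inv_sqrt_sub_div_le {a c z K : ℝ} (hc : 0 ≤ c) (hcz : c < z)
    (ha : |a| ≤ K * z) :
    |a * (√(z ^ 2 - c ^ 2))⁻¹ - a / z| ≤ K * c * (√(z ^ 2 - c ^ 2))⁻¹ := by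
  set s := √(z ^ 2 - c ^ 2)
  have hz : 0 < z := hc.trans_lt hcz
  have hs : 0 < s := sqrt_pos.2 (by nlinarith)
  have hs2 : s ^ 2 = z ^ 2 - c ^ 2 := sq_sqrt (by nlinarith)
  have hsz : s ≤ z := by nlinarith
  have hzsc : z - s ≤ c := by nlinarith
  calc |a * s⁻¹ - a / z| = |a| * ((z - s) / (s * z)) := by
        rw [← abs_of_nonneg (show 0 ≤ (z - s) / (s * z) by positivity), ← abs_mul]
        congr 1
        field_simp
      _ ≤ K * z * (c / (s * z)) := by
        have := (abs_nonneg a).trans ha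
        gcongr
      _ = K * c * s⁻¹ := by field_simp

theorem LipschitzOnWith.abs_sub_apply_zero_le {f : ℝ → ℝ} {K : ℝ≥0} {b z : ℝ}
    (hf : LipschitzOnWith K f (Icc 0 b)) (hz : z ∈ Icc 0 b) : |f z - f 0| ≤ K * z := by
  simpa [dist_eq_norm, abs_of_nonneg hz.1] using
    hf.dist_le_mul z hz 0 ⟨le_rfl, hz.1.trans hz.2⟩

theorem LipschitzOnWith.integrableOn_slope_zero {f : ℝ → ℝ} {K : ℝ≥0} {b : ℝ}
    (hf : LipschitzOnWith K f (Icc 0 b)) :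
    IntegrableOn (fun z => (f z - f 0) / z) (Ioc 0 b) := by
  have hcont : ContinuousOn (fun z => (f z - f 0) / z) (Ioc 0 b) :=
    ((hf.continuousOn.mono Ioc_subset_Icc_self).sub continuousOn_const).div continuousOn_id
      fun z hz => hz.1.ne'
  refine .of_bound measure_Ioc_lt_top (hcont.aestronglyMeasurable measurableSet_Ioc) K
    ((ae_restrict_iff' measurableSet_Ioc).2 (.of_forall fun z hz => ?_))
  rw [norm_div, norm_of_nonneg hz.1.le, div_le_iff₀ hz.1]
  exact hf.abs_sub_apply_zero_le (Ioc_subset_Icc_self hz)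

theorem tendsto_intervalIntegral_nhdsGT {f : ℝ → ℝ} {a b : ℝ} (hab : a < b)
    (hf : IntervalIntegrable f volume a b) :
    Tendsto (fun c => ∫ x in c..b, f x) (𝓝[>] a) (𝓝 (∫ x in a..b, f x)) := by
  have hcont := intervalIntegral.continuousOn_primitive_interval' hf.symm left_mem_uIcc
  rw [uIcc_of_ge hab.le] at hcont
  have := ((hcont a (left_mem_Icc.2 hab.le)).mono_of_mem_nhdsWithin
    (mem_of_superset (Ioo_mem_nhdsGT hab) Ioo_subset_Icc_self)).tendsto.neg
  simpa only [← intervalIntegral.integral_symm] using this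

theorem tendsto_integral_mul_inv_sqrt_sub_integral_slope {f : ℝ → ℝ} {K : ℝ≥0} {b : ℝ}
    (hb : 0 < b) (hf : LipschitzOnWith K f (Icc 0 b)) :
    Tendsto (fun c => (∫ z in c..b, (f z - f 0) * (√(z ^ 2 - c ^ 2))⁻¹) -
      ∫ z in c..b, (f z - f 0) / z) (𝓝[>] 0) (𝓝 0) := by
  have hbound : Tendsto (fun c => K * (c * log (b + √(b ^ 2 - c ^ 2)) - c * log c))
      (𝓝[>] 0) (𝓝 0) := by
    have : Continuous fun c => K * (c * log (b + √(b ^ 2 - c ^ 2)) - c * log c) :=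
      continuous_const.mul
        ((continuous_id.mul (continuous_log_add_sqrt_sq_sub_sq hb)).sub continuous_mul_log)
    simpa using (this.tendsto' 0 _ (by simp)).mono_left nhdsWithin_le_nhds
  refine squeeze_zero_norm' ?_ hbound
  filter_upwards [Ioo_mem_nhdsGT hb] with c hc
  have hker := intervalIntegrable_inv_sqrt_sq_sub_sq hc.1 hc.2.le
  have hslope : IntervalIntegrable (fun z => (f z - f 0) / z) volume c b :=
    (intervalIntegrable_iff_integrableOn_Ioc_of_le hc.2.le).2 <|
      hf.integrableOn_slope_zero.mono_set (Ioc_subset_Ioc_left hc.1.le)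
  rw [← intervalIntegral.integral_sub (intervalIntegrable_mul_inv_sqrt_sq_sub_sq
    (f := fun z => f z - f 0) hc.1 hc.2.le
    ((hf.continuousOn.mono (Icc_subset_Icc_left hc.1.le)).sub continuousOn_const)) hslope]
  calc _ ≤ ∫ z in c..b, K * c * (√(z ^ 2 - c ^ 2))⁻¹ :=
        intervalIntegral.norm_integral_le_of_norm_le hc.2.le (.of_forall fun z hz =>
          abs_mul_inv_sqrt_sub_div_le hc.1.le hz.1 (hf.abs_sub_apply_zero_le
            ⟨(hc.1.trans hz.1).le, hz.2⟩)) (hker.const_mul _)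
    _ = _ := by
        rw [intervalIntegral.integral_const_mul, integral_inv_sqrt_sq_sub_sq hc.1 hc.2.le]
        ring

/-- the one-dimensional limit giving the leading terms of the
expansion of the exterior homogeneous solution near the light cone
(Appendix B.1.2 of the paper): as z₀ → 0⁺,
∫_{z₀}^1 L(z)(z²−z₀²)^{−1/2} dz − L(0)·ln(2/z₀) → ∫₀^1 (L(z)−L(0))/z dz. -/
theorem exterior_expansion_one_dim
    (L : ℝ → ℝ) (hL : ContDiffOn ℝ 1 L (Set.Icc 0 1)) :
    IntegrableOn (fun z => (L z - L 0) / z) (Set.Ioo 0 1) ∧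
    Tendsto
      (fun z0 : ℝ =>
        (∫ z in z0..1, L z * (Real.sqrt (z ^ 2 - z0 ^ 2))⁻¹) -
          L 0 * Real.log (2 / z0))
      (nhdsWithin 0 (Set.Ioi 0))
      (nhds (∫ z in Set.Ioo 0 1, (L z - L 0) / z)) := by
  obtain ⟨K, hK⟩ := hL.exists_lipschitzOnWith one_ne_zero (convex_Icc 0 1) isCompact_Icc
  have hslope := hK.integrableOn_slope_zero
  refine ⟨hslope.mono_set Ioo_subset_Ioc_self, ?_⟩
  rw [← integral_Ioc_eq_integral_Ioo, ← intervalIntegral.integral_of_le zero_le_one]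
  have hlog : Tendsto (fun c : ℝ => log (1 + √(1 ^ 2 - c ^ 2)) - log 2) (𝓝[>] 0) (𝓝 0) := by
    simpa [one_add_one_eq_two] using
      (((continuous_log_add_sqrt_sq_sub_sq one_pos).tendsto 0).mono_left
        nhdsWithin_le_nhds).sub_const (log 2)
  have hlim := ((tendsto_intervalIntegral_nhdsGT one_pos
    ((intervalIntegrable_iff_integrableOn_Ioc_of_le zero_le_one).2 hslope)).add
    (tendsto_integral_mul_inv_sqrt_sub_integral_slope one_pos hK)).add (hlog.const_mul (L 0))
  simp only [mul_zero, add_zero] at hlim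
  refine hlim.congr' ?_
  filter_upwards [Ioo_mem_nhdsGT one_pos] with c hc
  rw [integral_mul_inv_sqrt_sq_sub_sq hc.1 hc.2.le
    (hK.continuousOn.mono (Icc_subset_Icc_left hc.1.le)) (L 0), log_div two_ne_zero hc.1.ne']
  ring
end
end

section
/- Let k ≥ 1 and let N be a 2k times continuously differentiable real-valued function on an open neighborhood of the closed unit disc in ℝ². Define A(ρ) = (1/2π)∫₀^{2π} N(ρ·cos θ, ρ·sin θ) dθ for ρ ∈ [0,1]. Then there exist real constants c₀, …, c_{k−1} and a continuous function R: [0,1] → ℝ such that A(ρ) = Σ_{j=0}^{k−1} c_j·ρ^{2j} + R(ρ)·ρ^{2k} for all ρ ∈ [0,1]. -/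
/-!
Expand `N` by Taylor's formula with integral remainder along each ray `t ↦ t • (cos θ, sin θ)`.
The term of order `j` is `ρ ^ j / j! · DʲN(0)(v, …, v)` with `v = (cos θ, sin θ)`; since
`v (θ + π) = -v θ`, for odd `j` it is antiperiodic in `θ` and averages to zero over the circle.
What remains of the order `2k` remainder after factoring out `ρ ^ (2k)` is an integral of
`D²ᵏN` over a compact set inside `U`, hence continuous in `ρ`.
-/

noncomputable section

open MeasureTheory Real Set Filter Topology
open scoped Nat

theorem map_add_smul_eq_sum_add_integral_iteratedFDeriv {E F : Type*}
    [NormedAddCommGroup E] [NormedSpace ℝ E] [NormedAddCommGroup F] [NormedSpace ℝ F]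
    [CompleteSpace F] {f : E → F} {x y : E} {r : ℝ} {n : ℕ}
    (hf : ∀ t ∈ Icc (0 : ℝ) 1, ContDiffAt ℝ (n + 1) f (x + (t * r) • y)) :
    f (x + r • y) =
      ∑ j ∈ Finset.range (n + 1), (r ^ j / j !) • iteratedFDeriv ℝ j f x (fun _ => y) +
      (r ^ (n + 1) / n !) •
        ∫ t in 0..1, (1 - t) ^ n • iteratedFDeriv ℝ (n + 1) f (x + (t * r) • y) (fun _ => y) := by
  have hpow (j : ℕ) (z : E) (g : E [×j]→L[ℝ] F) : g (fun _ => r • z) = r ^ j • g (fun _ => z) := by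
    simpa using g.map_smul_univ (fun _ => r) (fun _ => z)
  rw [map_add_eq_sum_add_integral_iteratedFDeriv (f := f) (by simpa [mul_smul] using hf)]
  simp only [hpow, mul_smul, smul_comm _ (r ^ (n + 1)), intervalIntegral.integral_smul,
    div_eq_inv_mul]

theorem Function.Antiperiodic.continuousMultilinearMap_apply_of_odd {E F : Type*}
    [NormedAddCommGroup E] [NormedSpace ℝ E] [NormedAddCommGroup F] [NormedSpace ℝ F]
    {j : ℕ} (hj : Odd j) (M : E [×j]→L[ℝ] F) {w : ℝ → E} {c : ℝ}
    (hw : Function.Antiperiodic w c) : Function.Antiperiodic (fun θ => M (fun _ => w θ)) c := by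
  intro θ
  simpa [hw θ, hj.neg_one_pow] using M.map_smul_univ (fun _ => (-1 : ℝ)) (fun _ => w θ)

theorem Function.Antiperiodic.intervalIntegral_eq_zero {E : Type*}
    [NormedAddCommGroup E] [NormedSpace ℝ E] {f : ℝ → E} {c : ℝ}
    (hf : Function.Antiperiodic f c) (hcont : Continuous f) (a : ℝ) :
    ∫ x in a..a + 2 * c, f x = 0 := by
  have hshift : ∫ x in a + c..a + 2 * c, f x = -∫ x in a..a + c, f x := by
    rw [← intervalIntegral.integral_neg]
    rw [show (fun x => -f x) = fun x => f (x + c) from funext fun x => (hf x).symm,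
      intervalIntegral.integral_comp_add_right]
    ring_nf
  rw [← intervalIntegral.integral_add_adjacent_intervals (b := a + c)
    (hcont.intervalIntegrable _ _) (hcont.intervalIntegrable _ _), hshift, add_neg_cancel]

theorem intervalIntegral.continuousOn_parametric_intervalIntegral_of_continuousOn {X E : Type*}
    [TopologicalSpace X] [NormedAddCommGroup E] [NormedSpace ℝ E] {f : X → ℝ → E} {s : Set X}
    {a b : ℝ}
    (hab : a ≤ b) (hf : ContinuousOn (Function.uncurry f) (s ×ˢ Icc a b)) :
    ContinuousOn (fun x => ∫ t in a..b, f x t) s := by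
  rw [continuousOn_iff_continuous_domRestrict]
  -- Clamping `t` into `[a, b]` leaves the integral unchanged and makes the integrand continuous.
  have hclamp : s.domRestrict (fun x => ∫ t in a..b, f x t) =
      fun x : s => ∫ t in a..b, f x (projIcc a b hab t) := by
    ext x
    refine intervalIntegral.integral_congr fun t ht => ?_
    rw [uIcc_of_le hab] at ht
    simp [projIcc_of_mem hab ht]
  rw [hclamp]
  refine intervalIntegral.continuous_parametric_intervalIntegral_of_continuous' ?_ a b
  exact hf.comp_continuous (f := fun p : s × ℝ => ((p.1 : X), (projIcc a b hab p.2 : ℝ)))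
    (by fun_prop) fun p => ⟨p.1.2, (projIcc a b hab p.2).2⟩

theorem Finset.sum_range_two_mul_of_odd_eq_zero {M : Type*} [AddCommMonoid M] {f : ℕ → M}
    (hf : ∀ j, Odd j → f j = 0) (k : ℕ) :
    ∑ j ∈ Finset.range (2 * k), f j = ∑ i ∈ Finset.range k, f (2 * i) := by
  induction k with
  | zero => simp
  | succ k ih =>
    rw [mul_add_one, Finset.sum_range_succ, Finset.sum_range_succ, ih, Finset.sum_range_succ,
      hf (2 * k + 1) (odd_two_mul_add_one k), add_zero]

def cosSin (θ : ℝ) : ℝ × ℝ := (cos θ, sin θ)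

theorem cosSin_antiperiodic : Function.Antiperiodic cosSin π := by
  intro θ; simp [cosSin, cos_add_pi, sin_add_pi]

def unitDisc : Set (ℝ × ℝ) := {p | p.1 ^ 2 + p.2 ^ 2 ≤ 1}

theorem smul_cosSin_mem_unitDisc {s : ℝ} (hs : |s| ≤ 1) (θ : ℝ) : s • cosSin θ ∈ unitDisc := by
  have h := cos_sq_add_sin_sq θ
  simp only [unitDisc, cosSin, Prod.smul_mk, smul_eq_mul, mem_ofPred_eq]
  nlinarith [sq_abs s, abs_nonneg s]

def circleMoment (N : ℝ × ℝ → ℝ) (j : ℕ) : ℝ :=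
  (2 * π * j !)⁻¹ * ∫ θ in 0..2 * π, iteratedFDeriv ℝ j N 0 (fun _ => cosSin θ)

def rayRemainder (N : ℝ × ℝ → ℝ) (n : ℕ) (ρ θ : ℝ) : ℝ :=
  (∫ t in 0..1, (1 - t) ^ n * iteratedFDeriv ℝ (n + 1) N ((t * ρ) • cosSin θ) (fun _ => cosSin θ))
    / n !

def circleRemainder (N : ℝ × ℝ → ℝ) (n : ℕ) (ρ : ℝ) : ℝ :=
  (2 * π)⁻¹ * ∫ θ in 0..2 * π, rayRemainder N n ρ θ

theorem circleMoment_of_odd (N : ℝ × ℝ → ℝ) {j : ℕ} (hj : Odd j) : circleMoment N j = 0 := by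
  have h := cosSin_antiperiodic.continuousMultilinearMap_apply_of_odd hj (iteratedFDeriv ℝ j N 0)
  have hint := h.intervalIntegral_eq_zero (by unfold cosSin; fun_prop) 0
  rw [zero_add] at hint
  rw [circleMoment, hint, mul_zero]

section

variable {N : ℝ × ℝ → ℝ} {n : ℕ}

theorem map_smul_cosSin_eq_sum_add (hN : ∀ p ∈ unitDisc, ContDiffAt ℝ (n + 1) N p) {ρ : ℝ}
    (hρ : |ρ| ≤ 1) (θ : ℝ) :
    N (ρ • cosSin θ) =
      ∑ j ∈ Finset.range (n + 1), ρ ^ j / j ! * iteratedFDeriv ℝ j N 0 (fun _ => cosSin θ) +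
      ρ ^ (n + 1) * rayRemainder N n ρ θ := by
  have hray : ∀ t ∈ Icc (0 : ℝ) 1, ContDiffAt ℝ (n + 1) N (0 + (t * ρ) • cosSin θ) := by
    intro t ht
    rw [zero_add]
    refine hN _ (smul_cosSin_mem_unitDisc ?_ θ)
    rw [abs_mul, abs_of_nonneg ht.1]
    nlinarith [ht.2, abs_nonneg ρ]
  rw [← zero_add (ρ • cosSin θ), map_add_smul_eq_sum_add_integral_iteratedFDeriv hray]
  simp only [smul_eq_mul, zero_add, rayRemainder]
  ring

theorem continuousOn_rayRemainder (hN : ∀ p ∈ unitDisc, ContDiffAt ℝ (n + 1) N p) :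
    ContinuousOn (Function.uncurry (rayRemainder N n)) (Icc (-1) 1 ×ˢ univ) := by
  have hD : ContinuousOn (iteratedFDeriv ℝ (n + 1) N) unitDisc := fun p hp =>
    ((hN p hp).continuousAt_iteratedFDeriv le_rfl).continuousWithinAt
  have hmaps : MapsTo (fun q : (ℝ × ℝ) × ℝ => (q.2 * q.1.1) • cosSin q.1.2)
      ((Icc (-1) 1 ×ˢ univ) ×ˢ Icc 0 1) unitDisc := by
    rintro ⟨⟨ρ, θ⟩, t⟩ ⟨⟨hρ, -⟩, ht⟩
    refine smul_cosSin_mem_unitDisc ?_ θ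
    rw [abs_mul, abs_of_nonneg ht.1]
    nlinarith [ht.2, abs_le.2 hρ, abs_nonneg ρ]
  have hDray := hD.comp (by unfold cosSin; fun_prop) hmaps
  refine ContinuousOn.div_const ?_ _
  refine intervalIntegral.continuousOn_parametric_intervalIntegral_of_continuousOn zero_le_one ?_
  exact ((continuousOn_const.sub continuousOn_snd).pow n).mul
    (hDray.eval (by unfold cosSin; fun_prop))

theorem continuousOn_circleRemainder (hN : ∀ p ∈ unitDisc, ContDiffAt ℝ (n + 1) N p) :
    ContinuousOn (circleRemainder N n) (Icc (-1) 1) :=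
  continuousOn_const.mul <|
    intervalIntegral.continuousOn_parametric_intervalIntegral_of_continuousOn (by positivity) <|
      (continuousOn_rayRemainder hN).mono (prod_mono subset_rfl (subset_univ _))

theorem circleAverage_eq_sum_add (hN : ∀ p ∈ unitDisc, ContDiffAt ℝ (n + 1) N p) {ρ : ℝ}
    (hρ : |ρ| ≤ 1) :
    (1 / (2 * π)) * ∫ θ in (0 : ℝ)..(2 * π), N (ρ * cos θ, ρ * sin θ) =
      ∑ j ∈ Finset.range (n + 1), circleMoment N j * ρ ^ j +
      circleRemainder N n ρ * ρ ^ (n + 1) := by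
  have hterm (j : ℕ) :
      Continuous fun θ => ρ ^ j / j ! * iteratedFDeriv ℝ j N 0 (fun _ => cosSin θ) := by
    unfold cosSin; fun_prop
  have hrem : Continuous fun θ => ρ ^ (n + 1) * rayRemainder N n ρ θ :=
    continuous_const.mul <| (continuousOn_rayRemainder hN).comp_continuous
      (f := fun θ => (ρ, θ)) (by fun_prop) fun _ => ⟨abs_le.1 hρ, trivial⟩
  calc (1 / (2 * π)) * ∫ θ in (0 : ℝ)..(2 * π), N (ρ * cos θ, ρ * sin θ)
      = (2 * π)⁻¹ * ∫ θ in (0 : ℝ)..(2 * π), (∑ j ∈ Finset.range (n + 1),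
          ρ ^ j / j ! * iteratedFDeriv ℝ j N 0 (fun _ => cosSin θ)
          + ρ ^ (n + 1) * rayRemainder N n ρ θ) := by
        simp only [one_div, ← map_smul_cosSin_eq_sum_add hN hρ]
        rfl
    _ = _ := by
        rw [intervalIntegral.integral_add
          ((continuous_finsetSum _ fun j _ => hterm j).intervalIntegrable _ _)
          (hrem.intervalIntegrable _ _), intervalIntegral.integral_finsetSum
          fun j _ => (hterm j).intervalIntegrable _ _]
        simp only [intervalIntegral.integral_const_mul, circleMoment, circleRemainder, mul_add,
          Finset.mul_sum]
        congr 1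
        · exact Finset.sum_congr rfl fun j _ => by field_simp
        · ring

end

/-- circle averages of a C^{2k} function have an expansion in
even powers of the radius with continuous remainder
(Appendix A.2.1 of the paper). -/
theorem circle_average_even_expansion
    (k : ℕ) (hk : 1 ≤ k)
    (N : ℝ × ℝ → ℝ) (U : Set (ℝ × ℝ)) (hU : IsOpen U)
    (hdisc : {p : ℝ × ℝ | p.1 ^ 2 + p.2 ^ 2 ≤ 1} ⊆ U)
    (hN : ContDiffOn ℝ (2 * k : ℕ) N U)
    (A : ℝ → ℝ)
    (hA : ∀ ρ : ℝ, A ρ =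
      (1 / (2 * π)) * ∫ θ in (0:ℝ)..(2 * π), N (ρ * Real.cos θ, ρ * Real.sin θ)) :
    ∃ c : Fin k → ℝ, ∃ R : ℝ → ℝ, ContinuousOn R (Set.Icc 0 1) ∧
      ∀ ρ ∈ Set.Icc (0:ℝ) 1,
        A ρ = (∑ j : Fin k, c j * ρ ^ (2 * (j : ℕ))) + R ρ * ρ ^ (2 * k) := by
  obtain ⟨n, hn⟩ : ∃ n, 2 * k = n + 1 := ⟨2 * k - 1, by omega⟩
  have hN' : ∀ p ∈ unitDisc, ContDiffAt ℝ (n + 1) N p := fun p hp => by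
    have := hN.contDiffAt (hU.mem_nhds (hdisc hp))
    rwa [hn, Nat.cast_add, Nat.cast_one] at this
  refine ⟨fun j => circleMoment N (2 * j), circleRemainder N n,
    (continuousOn_circleRemainder hN').mono (Icc_subset_Icc (by norm_num) le_rfl), fun ρ hρ => ?_⟩
  have hρ' : |ρ| ≤ 1 := abs_le.2 ⟨by linarith [hρ.1], hρ.2⟩
  have hodd (j : ℕ) (hj : Odd j) : circleMoment N j * ρ ^ j = 0 := by
    rw [circleMoment_of_odd N hj, zero_mul]
  rw [hA, circleAverage_eq_sum_add hN' hρ', ← hn, Finset.sum_range_two_mul_of_odd_eq_zero hodd,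
    Finset.sum_range (fun i => circleMoment N (2 * i) * ρ ^ (2 * i))]
end
end
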